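/- arXiv:alg-geom/9710013 — 4 statements merged into one kernel-verified Lean document; each statement's English description precedes it below -/
import Mathlib

section
/- Let H = ⨁_{ℓ²} H_i and A an operator with bounded blocks A_ij whose norm matrix (‖A_ij‖) defines an operator α on ℓ². If α is compact and every block A_ij is a compact operator, then A is a compact operator on H. -/
/-!
Write `P_N` for the truncation of `ℓ²` sequences to their first `N` coordinates and
`ν x = (‖x j‖)_j`, an element of real `ℓ²` with `‖ν x‖ = ‖x‖`. Expanding `A x` over the blocks
gives the coordinatewise domination `‖(A x) i‖ ≤ (α (ν x)) i`. Hence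
`‖A - P_N A‖ ≤ ‖α - P_N α‖`, which tends to `0` because `α` is compact, and for every row
`‖eᵢ A - eᵢ A P_M‖ ≤ ‖eᵢ α - eᵢ α P_M‖`, which tends to `0` because the functional `eᵢ α` is
given by a vector of `ℓ²`. The operators `eᵢ A P_M` are finite sums of the compact blocks, so
every row is compact; the operators `P_N A` are finite sums of rows, so `A` is a norm limit of
compact operators.
-/

open scoped ENNReal
open Filter Topology

namespace lp

variable {ι : Type*} {E F : ι → Type*} [∀ i, NormedAddCommGroup (E i)]
  [∀ i, NormedAddCommGroup (F i)] {p : ℝ≥0∞}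

lemma norm_le_norm_of_forall_norm_apply_le (hp : 0 < p.toReal) {f : lp E p} {g : lp F p}
    (h : ∀ i, ‖f i‖ ≤ ‖g i‖) : ‖f‖ ≤ ‖g‖ := by
  rw [norm_eq_tsum_rpow hp f, norm_eq_tsum_rpow hp g]
  gcongr with i
  · exact (hasSum_norm hp f).summable
  · exact (hasSum_norm hp g).summable
  · exact h i

noncomputable def normSeq (x : lp E p) : lp (fun _ : ι => ℝ) p :=
  ⟨fun i => ‖x i‖, (lp.memℓp x).norm⟩

@[simp] lemma normSeq_apply (x : lp E p) (i : ι) : normSeq x i = ‖x i‖ := rfl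

lemma norm_normSeq (hp : 0 < p.toReal) (x : lp E p) : ‖normSeq x‖ = ‖x‖ :=
  le_antisymm (norm_le_norm_of_forall_norm_apply_le hp fun i => by simp)
    (norm_le_norm_of_forall_norm_apply_le hp fun i => by simp)

section Truncate

variable {𝕜 : Type*} [NontriviallyNormedField 𝕜] {E : ℕ → Type*} [∀ i, NormedAddCommGroup (E i)]
  [∀ i, NormedSpace 𝕜 (E i)] {p : ℝ≥0∞} [Fact (1 ≤ p)]

variable (𝕜 E p) in
noncomputable def truncate (N : ℕ) : lp E p →L[𝕜] lp E p :=
  ∑ j ∈ Finset.range N, (singleContinuousLinearMap 𝕜 E p j).comp (evalCLM 𝕜 E p j)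

lemma truncate_eq_sum (N : ℕ) (f : lp E p) :
    truncate 𝕜 E p N f = ∑ j ∈ Finset.range N, lp.single p j (f j) := by
  simp [truncate, evalCLM]

lemma truncate_apply (N : ℕ) (f : lp E p) (i : ℕ) :
    truncate 𝕜 E p N f i = if i < N then f i else 0 := by
  simp only [truncate_eq_sum, coeFn_sum, Finset.sum_apply, lp.single_apply, Finset.sum_pi_single,
    Finset.mem_range]

lemma tendsto_truncate (hp : p ≠ ∞) (f : lp E p) :
    Tendsto (fun N => truncate 𝕜 E p N f) atTop (𝓝 f) := by
  simpa only [truncate_eq_sum] using (lp.hasSum_single hp f).tendsto_sum_nat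

lemma sub_truncate_apply (N : ℕ) (f : lp E p) (i : ℕ) :
    (f - truncate 𝕜 E p N f) i = if i < N then 0 else f i := by
  rw [coeFn_sub, Pi.sub_apply, truncate_apply]
  split_ifs <;> simp

lemma antitone_norm_sub_truncate (hp : p ≠ ∞) (f : lp E p) :
    Antitone fun N => ‖f - truncate 𝕜 E p N f‖ := by
  intro M N hMN
  refine norm_le_norm_of_forall_norm_apply_le (p.toReal_pos_iff_ne_top.mpr hp) fun i => ?_
  simp only [sub_truncate_apply]
  split_ifs <;> first | omega | simp

lemma normSeq_sub_truncate (N : ℕ) (f : lp E p) :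
    normSeq (f - truncate 𝕜 E p N f) = normSeq f - truncate ℝ _ p N (normSeq f) := by
  ext i
  simp only [normSeq_apply, sub_truncate_apply]
  split_ifs <;> simp

end Truncate

section Compact

variable {𝕜 : Type*} [NontriviallyNormedField 𝕜] {E : ℕ → Type*} [∀ i, NormedAddCommGroup (E i)]
  [∀ i, NormedSpace 𝕜 (E i)] {p : ℝ≥0∞} [Fact (1 ≤ p)]
  {X Y : Type*} [NormedAddCommGroup X] [NormedSpace 𝕜 X] [NormedAddCommGroup Y] [NormedSpace 𝕜 Y]

lemma comp_truncate_eq_sum (S : lp E p →L[𝕜] Y) (N : ℕ) :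
    S.comp (truncate 𝕜 E p N) = ∑ j ∈ Finset.range N,
      (S.comp (singleContinuousLinearMap 𝕜 E p j)).comp (evalCLM 𝕜 E p j) := by
  ext x
  simp [truncate_eq_sum, evalCLM]

lemma truncate_comp_eq_sum (T : X →L[𝕜] lp E p) (N : ℕ) :
    (truncate 𝕜 E p N).comp T = ∑ i ∈ Finset.range N,
      (singleContinuousLinearMap 𝕜 E p i).comp ((evalCLM 𝕜 E p i).comp T) := by
  ext x
  simp [truncate_eq_sum, evalCLM]

lemma isCompactOperator_of_tendsto_comp_truncate [CompleteSpace Y] {S : lp E p →L[𝕜] Y}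
    (hS : ∀ j, IsCompactOperator (S.comp (singleContinuousLinearMap 𝕜 E p j)))
    (h : Tendsto (fun N => S.comp (truncate 𝕜 E p N)) atTop (𝓝 S)) : IsCompactOperator S := by
  refine isCompactOperator_of_tendsto h (Eventually.of_forall fun N => ?_)
  rw [comp_truncate_eq_sum]
  exact Submodule.sum_mem (compactOperator (RingHom.id 𝕜) _ _) fun j _ => (hS j).comp_clm _

lemma isCompactOperator_of_tendsto_truncate_comp [∀ i, CompleteSpace (E i)] {T : X →L[𝕜] lp E p}
    (hT : ∀ i, IsCompactOperator ((evalCLM 𝕜 E p i).comp T))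
    (h : Tendsto (fun N => (truncate 𝕜 E p N).comp T) atTop (𝓝 T)) : IsCompactOperator T := by
  refine isCompactOperator_of_tendsto h (Eventually.of_forall fun N => ?_)
  rw [truncate_comp_eq_sum]
  exact Submodule.sum_mem (compactOperator (RingHom.id 𝕜) _ _) fun i _ =>
    (hT i).clm_comp (singleContinuousLinearMap 𝕜 E p i)

end Compact

lemma _root_.IsCompactOperator.tendsto_truncate_comp {𝕜 : Type*} [RCLike 𝕜] {E : ℕ → Type*}
    [∀ i, NormedAddCommGroup (E i)] [∀ i, NormedSpace 𝕜 (E i)] {p : ℝ≥0∞} [Fact (1 ≤ p)]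
    {X : Type*} [NormedAddCommGroup X] [NormedSpace 𝕜 X] (hp : p ≠ ∞)
    {T : X →L[𝕜] lp E p} (hT : IsCompactOperator T) :
    Tendsto (fun N => (truncate 𝕜 E p N).comp T) atTop (𝓝 T) := by
  set K := closure (T '' Metric.closedBall 0 1)
  -- Dini's theorem: the tails `‖y - truncate N y‖` decrease to `0`, hence uniformly on compacts.
  have hunif : TendstoUniformlyOn (fun N y => ‖y - truncate 𝕜 E p N y‖) 0 atTop K :=
    Antitone.tendstoUniformlyOn_of_forall_tendsto (hT.isCompact_closure_image_closedBall 1)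
      (fun N => by fun_prop) (fun y _ => antitone_norm_sub_truncate hp y) continuousOn_const
      fun y _ => by simpa using ((tendsto_truncate hp y).const_sub y).norm
  rw [Metric.tendsto_nhds]
  intro ε hε
  filter_upwards [Metric.tendstoUniformlyOn_iff.mp hunif (ε / 2) (half_pos hε)] with N hN
  rw [dist_eq_norm]
  refine (ContinuousLinearMap.opNorm_le_of_unit_norm (half_pos hε).le fun x hx => ?_).trans_lt
    (half_lt_self hε)
  have hTx : T x ∈ K := subset_closure ⟨x, by simp [hx], rfl⟩
  simpa [norm_sub_rev] using (hN (T x) hTx).le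

section Hilbert

variable {𝕜 : Type*} [RCLike 𝕜] {E : ℕ → Type*} [∀ i, NormedAddCommGroup (E i)]
  [∀ i, InnerProductSpace 𝕜 (E i)]

lemma inner_truncate_left (N : ℕ) (f g : lp E 2) :
    inner 𝕜 (truncate 𝕜 E 2 N f) g = inner 𝕜 f (truncate 𝕜 E 2 N g) := by
  simp only [inner_eq_tsum, truncate_apply]
  congr 1 with i
  split_ifs <;> simp

lemma tendsto_comp_truncate [∀ i, CompleteSpace (E i)] (φ : lp E 2 →L[𝕜] 𝕜) :
    Tendsto (fun N => φ.comp (truncate 𝕜 E 2 N)) atTop (𝓝 φ) := by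
  obtain ⟨w, rfl⟩ := (InnerProductSpace.toDual 𝕜 (lp E 2)).surjective φ
  have hle : ∀ N, ‖(InnerProductSpace.toDual 𝕜 _ w).comp (truncate 𝕜 E 2 N) -
      InnerProductSpace.toDual 𝕜 _ w‖ ≤ ‖w - truncate 𝕜 E 2 N w‖ := fun N =>
    ContinuousLinearMap.opNorm_le_bound _ (norm_nonneg _) fun z => by
      simp only [sub_apply, ContinuousLinearMap.comp_apply,
        InnerProductSpace.toDual_apply_apply, ← inner_truncate_left, ← inner_sub_left]
      rw [← norm_sub_rev]
      exact norm_inner_le_norm _ _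
  rw [tendsto_iff_norm_sub_tendsto_zero]
  exact squeeze_zero (fun _ => norm_nonneg _) hle
    (by simpa using ((tendsto_truncate ENNReal.ofNat_ne_top w).const_sub w).norm)

end Hilbert

section BlockOperator

variable {𝕜 : Type*} [NontriviallyNormedField 𝕜] {ι κ : Type*} [DecidableEq κ]
  {E : κ → Type*} {F : ι → Type*} [∀ j, NormedAddCommGroup (E j)] [∀ j, NormedSpace 𝕜 (E j)]
  [∀ i, NormedAddCommGroup (F i)] [∀ i, NormedSpace 𝕜 (F i)]
  {p q : ℝ≥0∞} [Fact (1 ≤ p)] [Fact (1 ≤ q)]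

lemma hasSum_apply_single (hp : p ≠ ∞) (T : lp E p →L[𝕜] lp F q) (x : lp E p) (i : ι) :
    HasSum (fun j => T (lp.single p j (x j)) i) (T x i) :=
  ((lp.hasSum_single hp x).mapL T).mapL (evalCLM 𝕜 F q i)

lemma norm_apply_le_apply_normSeq (hp : p ≠ ∞) {B : ∀ i j, E j →L[𝕜] F i}
    {A : lp E p →L[𝕜] lp F q} {α : lp (fun _ : κ => ℝ) p →L[ℝ] lp (fun _ : ι => ℝ) q}
    (hA : ∀ j v i, A (lp.single p j v) i = B i j v)
    (hα : ∀ i j, α (lp.single p j 1) i = ‖B i j‖) (x : lp E p) (i : ι) :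
    ‖A x i‖ ≤ α (normSeq x) i := by
  have hAx : HasSum (fun j => B i j (x j)) (A x i) := by
    simpa only [hA] using hasSum_apply_single hp A x i
  have hαx : HasSum (fun j => ‖B i j‖ * ‖x j‖) (α (normSeq x) i) := by
    have hentry : ∀ j, α (lp.single p j (normSeq x j)) i = ‖B i j‖ * ‖x j‖ := fun j => by
      have hsingle : lp.single (E := fun _ : κ => ℝ) p j ‖x j‖ = ‖x j‖ • lp.single p j 1 := by
        rw [← lp.single_smul, smul_eq_mul, mul_one]
      rw [normSeq_apply, hsingle, map_smul, coeFn_smul, Pi.smul_apply, hα, smul_eq_mul, mul_comm]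
    simpa only [hentry] using hasSum_apply_single hp α (normSeq x) i
  exact hAx.norm_le_of_bounded hαx fun j => (B i j).le_opNorm _

end BlockOperator

section DominatedOperator

variable {𝕜 : Type*} [NontriviallyNormedField 𝕜] {E F : ℕ → Type*}
  [∀ j, NormedAddCommGroup (E j)] [∀ j, NormedSpace 𝕜 (E j)]
  [∀ i, NormedAddCommGroup (F i)] [∀ i, NormedSpace 𝕜 (F i)]
  {p q : ℝ≥0∞} [Fact (1 ≤ p)] [Fact (1 ≤ q)]
  {A : lp E p →L[𝕜] lp F q} {α : lp (fun _ : ℕ => ℝ) p →L[ℝ] lp (fun _ : ℕ => ℝ) q}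

lemma tendsto_truncate_comp_of_norm_apply_le (hp : p ≠ ∞) (hq : q ≠ ∞)
    (hdom : ∀ x i, ‖A x i‖ ≤ α (normSeq x) i)
    (hα : Tendsto (fun N => (truncate ℝ _ q N).comp α) atTop (𝓝 α)) :
    Tendsto (fun N => (truncate 𝕜 F q N).comp A) atTop (𝓝 A) := by
  have hp' : 0 < p.toReal := p.toReal_pos_iff_ne_top.mpr hp
  have hq' : 0 < q.toReal := q.toReal_pos_iff_ne_top.mpr hq
  have hle : ∀ N, ‖(truncate 𝕜 F q N).comp A - A‖ ≤ ‖(truncate ℝ _ q N).comp α - α‖ := fun N =>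
    ContinuousLinearMap.opNorm_le_bound _ (norm_nonneg _) fun x => calc
      ‖((truncate 𝕜 F q N).comp A - A) x‖ = ‖A x - truncate 𝕜 F q N (A x)‖ := by
        simp [norm_sub_rev]
      _ ≤ ‖α (normSeq x) - truncate ℝ _ q N (α (normSeq x))‖ :=
        norm_le_norm_of_forall_norm_apply_le hq' fun i => by
          simp only [sub_truncate_apply]
          split_ifs
          · simp
          · exact (hdom x i).trans (Real.le_norm_self _)
      _ = ‖((truncate ℝ _ q N).comp α - α) (normSeq x)‖ := by simp [norm_sub_rev]
      _ ≤ ‖(truncate ℝ _ q N).comp α - α‖ * ‖x‖ := by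
        simpa only [norm_normSeq hp'] using
          ((truncate ℝ _ q N).comp α - α).le_opNorm (normSeq x)
  rw [tendsto_iff_norm_sub_tendsto_zero] at hα ⊢
  exact squeeze_zero (fun _ => norm_nonneg _) hle hα

lemma tendsto_evalCLM_comp_comp_truncate_of_norm_apply_le (hp : p ≠ ∞)
    (hdom : ∀ x i, ‖A x i‖ ≤ α (normSeq x) i) (i : ℕ)
    (hα : Tendsto (fun M => ((evalCLM ℝ _ q i).comp α).comp (truncate ℝ _ p M)) atTop
      (𝓝 ((evalCLM ℝ _ q i).comp α))) :
    Tendsto (fun M => ((evalCLM 𝕜 F q i).comp A).comp (truncate 𝕜 E p M)) atTop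
      (𝓝 ((evalCLM 𝕜 F q i).comp A)) := by
  have hp' : 0 < p.toReal := p.toReal_pos_iff_ne_top.mpr hp
  set φ := (evalCLM ℝ _ q i).comp α
  have hle : ∀ M, ‖((evalCLM 𝕜 F q i).comp A).comp (truncate 𝕜 E p M) - (evalCLM 𝕜 F q i).comp A‖
      ≤ ‖φ.comp (truncate ℝ _ p M) - φ‖ := fun M =>
    ContinuousLinearMap.opNorm_le_bound _ (norm_nonneg _) fun x => calc
      ‖(((evalCLM 𝕜 F q i).comp A).comp (truncate 𝕜 E p M) - (evalCLM 𝕜 F q i).comp A) x‖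
          = ‖A (x - truncate 𝕜 E p M x) i‖ := by simp [evalCLM, norm_sub_rev]
      _ ≤ α (normSeq (x - truncate 𝕜 E p M x)) i := hdom _ i
      _ = -(φ.comp (truncate ℝ _ p M) - φ) (normSeq x) := by
        simp [φ, normSeq_sub_truncate, evalCLM]
      _ ≤ ‖(φ.comp (truncate ℝ _ p M) - φ) (normSeq x)‖ := neg_le_abs _
      _ ≤ ‖φ.comp (truncate ℝ _ p M) - φ‖ * ‖x‖ := by
        simpa only [norm_normSeq hp'] using (φ.comp (truncate ℝ _ p M) - φ).le_opNorm (normSeq x)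
  rw [tendsto_iff_norm_sub_tendsto_zero] at hα ⊢
  exact squeeze_zero (fun _ => norm_nonneg _) hle hα

end DominatedOperator

end lp

/-- If `A` is an operator on the ℓ²-direct sum `lp H 2` with bounded
blocks `B i j : H j →L H i`, the matrix of block norms gives a *compact* operator `α`
on `ℓ²(ℕ, ℝ)`, and every block `B i j` is compact, then `A` is compact. -/
theorem stmt1
    (H : ℕ → Type) [∀ i, NormedAddCommGroup (H i)] [∀ i, InnerProductSpace ℂ (H i)]
    [∀ i, CompleteSpace (H i)]
    (B : ∀ i j : ℕ, H j →L[ℂ] H i)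
    (A : lp H 2 →L[ℂ] lp H 2)
    (hA : ∀ (j : ℕ) (v : H j) (i : ℕ), A (lp.single 2 j v) i = B i j v)
    (α : lp (fun _ : ℕ => ℝ) 2 →L[ℝ] lp (fun _ : ℕ => ℝ) 2)
    (hα : ∀ i j : ℕ, α (lp.single 2 j (1 : ℝ)) i = ‖B i j‖)
    (hαc : IsCompactOperator α)
    (hB : ∀ i j : ℕ, IsCompactOperator (B i j)) :
    IsCompactOperator A := by
  have h2 : (2 : ℝ≥0∞) ≠ ∞ := ENNReal.ofNat_ne_top
  have hdom := lp.norm_apply_le_apply_normSeq h2 hA hα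
  refine lp.isCompactOperator_of_tendsto_truncate_comp (fun i => ?_)
    (lp.tendsto_truncate_comp_of_norm_apply_le h2 h2 hdom (hαc.tendsto_truncate_comp h2))
  refine lp.isCompactOperator_of_tendsto_comp_truncate (fun j => ?_)
    (lp.tendsto_evalCLM_comp_comp_truncate_of_norm_apply_le h2 hdom i (lp.tendsto_comp_truncate _))
  convert hB i j using 1
  ext v
  simp [lp.evalCLM, hA]
end

section
/- Let H = H₁ ⊕ H₂ be a direct sum of Hilbert spaces, V₁ the graph of a closed operator A₁ : H₁ → H₂ and V₂ the graph (with coordinates swapped) of a bounded operator A₂ : H₂ → H₁. If A₁ ∘ A₂ is compact, then the intersection V₁ ∩ V₂ is finite-dimensional. -/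
/-!
If `(x, y)` lies in both graphs then `x = A₂ y` and `y = A₁ x`, so `y` is a fixed vector of
`A₁ ∘ A₂` and determines `x`. Projecting to the second coordinate therefore embeds
`V₁ ∩ V₂` into the eigenspace of the compact operator `A₁ ∘ A₂` for the eigenvalue `1`,
which is finite-dimensional.
-/

open Module End

namespace LinearPMap

variable {K E F : Type*} [Field K] [AddCommGroup E] [Module K E] [AddCommGroup F] [Module K F]

def compOfRangeLE (f : E →ₗ.[K] F) (g : F →ₗ[K] E) (hg : ∀ y, g y ∈ f.domain) : F →ₗ[K] F :=
  f.toFun ∘ₗ g.codRestrict f.domain hg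

variable (f : E →ₗ.[K] F) (g : F →ₗ[K] E) (hg : ∀ y, g y ∈ f.domain)
  {V : Submodule K (E × F)} (hV : ∀ p ∈ V, p.1 = g p.2)
include hV

theorem snd_mem_eigenspace_of_mem_graph_inf {p : E × F} (hp : p ∈ f.graph ⊓ V) :
    p.2 ∈ eigenspace (f.compOfRangeLE g hg) 1 := by
  obtain ⟨hpf, hpV⟩ := Submodule.mem_inf.mp hp
  obtain ⟨x, hx, hfx⟩ := (mem_graph_iff f).mp hpf
  have hx' : (⟨g p.2, hg p.2⟩ : f.domain) = x := Subtype.ext (hx.trans (hV p hpV)).symm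
  rw [mem_eigenspace_iff, one_smul]
  change f ⟨g p.2, hg p.2⟩ = p.2
  rw [hx', hfx]

theorem finiteDimensional_graph_inf
    [FiniteDimensional K (eigenspace (f.compOfRangeLE g hg) 1)] :
    FiniteDimensional K ↥(f.graph ⊓ V) := by
  let π : ↥(f.graph ⊓ V) →ₗ[K] eigenspace (f.compOfRangeLE g hg) 1 :=
    ((LinearMap.snd K E F).comp (f.graph ⊓ V).subtype).codRestrict _
      fun p => snd_mem_eigenspace_of_mem_graph_inf f g hg hV p.2
  refine FiniteDimensional.of_injective π fun p q hpq => ?_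
  have h₂ : (p : E × F).2 = (q : E × F).2 := congrArg Subtype.val hpq
  have h₁ : (p : E × F).1 = (q : E × F).1 := by
    rw [hV _ (Submodule.mem_inf.mp p.2).2, hV _ (Submodule.mem_inf.mp q.2).2, h₂]
  exact Subtype.ext (Prod.ext h₁ h₂)

end LinearPMap

theorem stmt2_general
    {H₁ H₂ : Type}
    [NormedAddCommGroup H₁] [InnerProductSpace ℂ H₁]
    [NormedAddCommGroup H₂] [InnerProductSpace ℂ H₂] [CompleteSpace H₂]
    (A₁ : H₁ →ₗ.[ℂ] H₂)
    (A₂ : H₂ →L[ℂ] H₁)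
    (hrange : ∀ y : H₂, A₂ y ∈ A₁.domain)
    (hcompact : IsCompactOperator (fun y : H₂ => A₁ ⟨A₂ y, hrange y⟩))
    (V₂ : Submodule ℂ (H₁ × H₂))
    (hV₂ : (V₂ : Set (H₁ × H₂)) = {p : H₁ × H₂ | p.1 = A₂ p.2}) :
    FiniteDimensional ℂ ↥(A₁.graph ⊓ V₂) := by
  let T : H₂ →L[ℂ] H₂ := ⟨A₁.compOfRangeLE A₂ hrange, hcompact.continuous⟩
  have : FiniteDimensional ℂ (eigenspace T.toLinearMap 1) :=
    T.finite_dimensional_eigenspace hcompact 1 one_ne_zero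
  exact A₁.finiteDimensional_graph_inf A₂.toLinearMap hrange fun p hp => hV₂.subset hp

/-- Let `V₁` be the graph of a closed (possibly unbounded) operator
`A₁ : H₁ →ₗ. H₂` and `V₂` the swapped graph of a bounded operator `A₂ : H₂ →L H₁`.
If `A₁ ∘ A₂` is compact, then `V₁ ∩ V₂` is finite-dimensional. -/
theorem stmt2
    {H₁ H₂ : Type}
    [NormedAddCommGroup H₁] [InnerProductSpace ℂ H₁] [CompleteSpace H₁]
    [NormedAddCommGroup H₂] [InnerProductSpace ℂ H₂] [CompleteSpace H₂]
    (A₁ : H₁ →ₗ.[ℂ] H₂)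
    (hclosed : IsClosed (A₁.graph : Set (H₁ × H₂)))
    (A₂ : H₂ →L[ℂ] H₁)
    (hrange : ∀ y : H₂, A₂ y ∈ A₁.domain)
    (hcompact : IsCompactOperator (fun y : H₂ => A₁ ⟨A₂ y, hrange y⟩))
    (V₂ : Submodule ℂ (H₁ × H₂))
    (hV₂ : (V₂ : Set (H₁ × H₂)) = {p : H₁ × H₂ | p.1 = A₂ p.2}) :
    FiniteDimensional ℂ ↥(A₁.graph ⊓ V₂) :=
  stmt2_general A₁ A₂ hrange hcompact V₂ hV₂
end

section
/- Let H = H₁ ⊕ H₂, V₁ the graph of a bounded operator A₁ : H₁ → H₂, and V₂ the swapped graph of a bounded operator A₂ : H₂ → H₁. If A₁ ∘ A₂ is compact, then V₁ ∩ V₂ is finite-dimensional, V₁ + V₂ is closed of finite codimension in H, and dim(V₁ ∩ V₂) = codim(V₁ + V₂). -/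
/-!
With `K = A₁ ∘ A₂`, projecting to `H₂` identifies `V₁ ⊓ V₂` with `ker (1 - K)`, and the map
`p ↦ p.2 - A₁ p.1` identifies `V₁ ⊔ V₂` with the preimage of `range (1 - K)`, hence the quotient by
`V₁ ⊔ V₂` with `H₂ ⧸ range (1 - K)`. So everything reduces to the Riesz–Schauder theory of `1 - K`.
For an injective `j : ker (1 - K) → (range (1 - K))ᗮ`, the finite-rank perturbation
`1 - K + j ∘ P_ker` of `1 - K` is injective, hence surjective by the Fredholm alternative, so that
`H = range (1 - K) + j (ker (1 - K))`. This forces `dim (range (1 - K))ᗮ ≤ dim ker (1 - K)`;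
applied to the compact operator `K†`, for which the roles of the two spaces are exchanged, it gives
equality, and then the same decomposition shows that `range (1 - K)` is closed.
-/

namespace LinearMap

variable {R M₁ M₂ : Type*} [Ring R] [AddCommGroup M₁] [Module R M₁] [AddCommGroup M₂] [Module R M₂]

def swapGraph (g : M₂ →ₗ[R] M₁) : Submodule R (M₁ × M₂) :=
  g.graph.comap (LinearEquiv.prodComm R M₁ M₂).toLinearMap

@[simp]
theorem mem_swapGraph {g : M₂ →ₗ[R] M₁} {p : M₁ × M₂} : p ∈ g.swapGraph ↔ p.1 = g p.2 :=
  Iff.rfl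

variable (f : M₁ →ₗ[R] M₂) (g : M₂ →ₗ[R] M₁)

def graphInfSwapGraphEquiv : ↥(f.graph ⊓ g.swapGraph) ≃ₗ[R] ker (id - f ∘ₗ g) where
  toFun p := ⟨p.1.2, by
    obtain ⟨h₁, h₂⟩ := Submodule.mem_inf.1 p.2
    rw [mem_graph_iff] at h₁
    rw [mem_swapGraph] at h₂
    simp [← h₂, ← h₁]⟩
  invFun y := ⟨(g y, y), Submodule.mem_inf.2
    ⟨(mem_graph_iff _ _).2 (sub_eq_zero.1 (mem_ker.1 y.2)), mem_swapGraph.2 rfl⟩⟩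
  map_add' _ _ := rfl
  map_smul' _ _ := rfl
  left_inv p := Subtype.ext (Prod.ext (mem_swapGraph.1 (Submodule.mem_inf.1 p.2).2).symm rfl)
  right_inv _ := rfl

theorem graph_sup_swapGraph :
    f.graph ⊔ g.swapGraph = (range (id - f ∘ₗ g)).comap (snd R M₁ M₂ - f ∘ₗ fst R M₁ M₂) := by
  apply le_antisymm
  · refine sup_le (fun p hp => ?_) (fun p hp => ?_)
    · rw [mem_graph_iff] at hp
      simp [hp]
    · rw [mem_swapGraph] at hp
      exact ⟨p.2, by simp [hp]⟩
  · rintro p ⟨y, hy⟩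
    have hy : y - f (g y) = p.2 - f p.1 := hy
    have hp : p = (p.1 - g y, f (p.1 - g y)) + (g y, y) := by
      ext
      · simp
      · simp only [Prod.snd_add, map_sub]
        linear_combination (norm := abel) -hy
    rw [hp]
    exact Submodule.add_mem_sup ((mem_graph_iff _ _).2 rfl) (mem_swapGraph.2 rfl)

noncomputable def quotientGraphSupSwapGraphEquiv :
    ((M₁ × M₂) ⧸ (f.graph ⊔ g.swapGraph)) ≃ₗ[R] M₂ ⧸ range (id - f ∘ₗ g) :=
  let φ := (range (id - f ∘ₗ g)).mkQ ∘ₗ (snd R M₁ M₂ - f ∘ₗ fst R M₁ M₂)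
  have hφ : Function.Surjective φ :=
    (Submodule.mkQ_surjective _).comp fun y => ⟨(0, y), by simp⟩
  (Submodule.quotEquivOfEq _ _ (by rw [graph_sup_swapGraph, ker_comp, Submodule.ker_mkQ])).trans
    (φ.quotKerEquivOfSurjective hφ)

end LinearMap

open Metric ContinuousLinearMap
open scoped InnerProduct

theorem Submodule.eq_zero_of_mem_of_mem_orthogonal {𝕜 E : Type*} [RCLike 𝕜] [NormedAddCommGroup E]
    [InnerProductSpace 𝕜 E] {U : Submodule 𝕜 E} {x : E} (h : x ∈ U) (h' : x ∈ Uᗮ) : x = 0 :=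
  disjoint_def.1 U.orthogonal_disjoint x h h'

section Adjoint

variable {𝕜 : Type*} [RCLike 𝕜]
  {E : Type*} [NormedAddCommGroup E] [InnerProductSpace 𝕜 E] [CompleteSpace E]
  {F : Type*} [NormedAddCommGroup F] [InnerProductSpace 𝕜 F] [CompleteSpace F]

lemma ContinuousLinearMap.norm_adjoint_apply_sq_le (K : E →L[𝕜] F) (y : F) :
    ‖(K†) y‖ ^ 2 ≤ ‖K ((K†) y)‖ * ‖y‖ := by
  rw [apply_norm_sq_eq_inner_adjoint_left, adjoint_adjoint]
  exact re_inner_le_norm _ _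

theorem IsCompactOperator.adjoint {K : E →L[𝕜] F} (hK : IsCompactOperator K) :
    IsCompactOperator (K†) := by
  -- By `norm_adjoint_apply_sq_le`, a cover of `K K† (closedBall 0 1)` by finitely many balls of
  -- radius `ε ^ 2 / 2` pulls back to a cover of `K† (closedBall 0 1)` by balls of radius `ε`.
  refine (isCompactOperator_iff_isCompact_closure_image_closedBall ((K†) : F →ₗ[𝕜] E) one_pos).2
    ((TotallyBounded.closure ?_).isCompact_of_isClosed isClosed_closure)
  have hKK : IsCompactOperator (K ∘L K†) := hK.comp_clm (K†)
  have hL : TotallyBounded ((K ∘L K†) '' closedBall 0 1) :=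
    (hKK.isCompact_closure_image_closedBall (f := ((K ∘L K†) : F →ₗ[𝕜] F)) 1).totallyBounded.subset
      subset_closure
  rw [totallyBounded_iff]
  intro ε hε
  obtain ⟨t, htB, htfin, hcover⟩ := Set.exists_subset_image_finite_and.1
    (finite_approx_of_totallyBounded hL (ε ^ 2 / 2) (by positivity))
  refine ⟨(K†) '' t, htfin.image _, ?_⟩
  rintro _ ⟨y, hy, rfl⟩
  obtain ⟨_, ⟨z, hz, rfl⟩, hyz⟩ := Set.mem_iUnion₂.1 (hcover ⟨y, hy, rfl⟩)
  refine Set.mem_iUnion₂.2 ⟨(K†) z, ⟨z, hz, rfl⟩, ?_⟩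
  rw [mem_ball, dist_eq_norm, ← map_sub] at hyz
  rw [mem_ball, dist_eq_norm, coe_coe, ← map_sub]
  have hy : ‖y‖ ≤ 1 := mem_closedBall_zero_iff.1 hy
  have hz : ‖z‖ ≤ 1 := mem_closedBall_zero_iff.1 (htB hz)
  have hsq : ‖(K†) (y - z)‖ ^ 2 < ε ^ 2 := calc
    _ ≤ ‖K ((K†) (y - z))‖ * ‖y - z‖ := K.norm_adjoint_apply_sq_le (y - z)
    _ ≤ ‖K ((K†) (y - z))‖ * 2 := by gcongr; exact (norm_sub_le y z).trans (by linarith)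
    _ < ε ^ 2 / 2 * 2 := by gcongr; exact hyz
    _ = ε ^ 2 := by ring
  exact (pow_lt_pow_iff_left₀ (norm_nonneg _) hε.le two_ne_zero).1 hsq

end Adjoint

namespace IsCompactOperator

variable {𝕜 : Type*} [RCLike 𝕜]
  {H : Type*} [NormedAddCommGroup H] [InnerProductSpace 𝕜 H] [CompleteSpace H] {K : H →L[𝕜] H}

theorem finiteDimensional_ker_one_sub (hK : IsCompactOperator K) :
    FiniteDimensional 𝕜 (1 - K).ker := by
  have hker : (1 - K).ker = Module.End.eigenspace (K : Module.End 𝕜 H) 1 := by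
    ext x
    simp [sub_eq_zero, eq_comm (a := x)]
  exact hker ▸ finite_dimensional_eigenspace hK 1 one_ne_zero

theorem surjective_one_sub_of_injective (hK : IsCompactOperator K)
    (hinj : Function.Injective (1 - K : H →L[𝕜] H)) : Function.Surjective (1 - K : H →L[𝕜] H) := by
  rcases hK.hasEigenvalue_or_mem_resolventSet one_ne_zero with h | h
  · obtain ⟨x, hx⟩ := h.exists_hasEigenvector
    refine absurd (hinj ?_) hx.2
    simpa [sub_eq_zero] using hx.apply_eq_smul.symm
  · rw [spectrum.mem_resolventSet_iff, Algebra.algebraMap_eq_smul_one, one_smul,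
      isUnit_iff_bijective] at h
    exact h.2

theorem exists_eq_one_sub_apply_add_of_injective (hK : IsCompactOperator K)
    {j : (1 - K).ker →ₗ[𝕜] (1 - K).rangeᗮ} (hj : Function.Injective j) (y : H) :
    ∃ (x : H) (n : (1 - K).ker), y = (1 - K) x + j n := by
  have := hK.finiteDimensional_ker_one_sub
  let J : (1 - K).ker →L[𝕜] H := (1 - K).rangeᗮ.subtypeL ∘L LinearMap.toContinuousLinearMap j
  let F : H →L[𝕜] H := J ∘L (1 - K).ker.orthogonalProjectionOnto
  have hF : IsCompactOperator F := (isCompactOperator_of_locallyCompactSpace_rng J).comp_clm _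
  have hF_apply (x : H) : F x = j ((1 - K).ker.orthogonalProjectionOnto x) := rfl
  have hS : Function.Injective (1 - (K - F) : H →L[𝕜] H) := by
    rw [injective_iff_map_eq_zero]
    intro x hx
    have hsum : (1 - K) x + F x = 0 := by rw [← hx]; simp; abel
    have hxR' : (1 - K) x ∈ (1 - K).rangeᗮ := by
      rw [eq_neg_of_add_eq_zero_left hsum]
      exact Submodule.neg_mem _ (hF_apply x ▸ (j _).2)
    have hx0 : (1 - K) x = 0 :=
      Submodule.eq_zero_of_mem_of_mem_orthogonal (LinearMap.mem_range_self _ x) hxR'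
    have hjx : j ⟨x, hx0⟩ = 0 := by
      rw [hx0, zero_add] at hsum
      rwa [hF_apply, Submodule.orthogonalProjectionOnto_mem_subspace_eq_self ⟨x, hx0⟩,
        ZeroMemClass.coe_eq_zero] at hsum
    simpa using congrArg Subtype.val (hj (hjx.trans (map_zero j).symm))
  obtain ⟨x, hx⟩ := (hK.sub hF).surjective_one_sub_of_injective hS y
  exact ⟨x, (1 - K).ker.orthogonalProjectionOnto x, by rw [← hx, ← hF_apply]; simp; abel⟩

theorem rank_orthogonal_range_one_sub_le (hK : IsCompactOperator K) :
    Module.rank 𝕜 (1 - K).rangeᗮ ≤ Module.rank 𝕜 (1 - K).ker := by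
  by_contra! hlt
  obtain ⟨j, hj⟩ := rank_le_iff_exists_linearMap.1 hlt.le
  have hsurj : Function.Surjective j := by
    intro r
    obtain ⟨x, n, hxn⟩ := hK.exists_eq_one_sub_apply_add_of_injective hj r
    have hx : (1 - K) x = 0 := Submodule.eq_zero_of_mem_of_mem_orthogonal
      (LinearMap.mem_range_self _ x) (by rw [eq_sub_of_add_eq hxn.symm]; exact sub_mem r.2 (j n).2)
    exact ⟨n, Subtype.ext (by rw [hxn, hx, zero_add])⟩
  exact hlt.ne (LinearEquiv.ofBijective j ⟨hj, hsurj⟩).rank_eq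

theorem rank_ker_one_sub_eq_rank_orthogonal_range (hK : IsCompactOperator K) :
    Module.rank 𝕜 (1 - K).ker = Module.rank 𝕜 (1 - K).rangeᗮ := by
  have h := hK.adjoint.rank_orthogonal_range_one_sub_le
  rw [show 1 - K† = (1 - K)† by rw [map_sub, adjoint_one], orthogonal_range, adjoint_adjoint,
    ← orthogonal_range] at h
  exact le_antisymm h hK.rank_orthogonal_range_one_sub_le

theorem isClosed_range_one_sub (hK : IsCompactOperator K) :
    IsClosed ((1 - K).range : Set H) := by
  obtain ⟨j, hj⟩ := rank_le_iff_exists_linearMap.1 hK.rank_ker_one_sub_eq_rank_orthogonal_range.le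
  have hR := (1 - K).range.le_orthogonal_orthogonal
  suffices (1 - K).rangeᗮᗮ ≤ (1 - K).range from
    le_antisymm this hR ▸ Submodule.isClosed_orthogonal _
  intro y hy
  obtain ⟨x, n, rfl⟩ := hK.exists_eq_one_sub_apply_add_of_injective hj y
  have hn : (j n : H) = 0 := Submodule.eq_zero_of_mem_of_mem_orthogonal (j n).2
    (by simpa using sub_mem hy (hR (LinearMap.mem_range_self _ x)))
  rw [hn, add_zero]
  exact LinearMap.mem_range_self _ x

theorem nonempty_linearEquiv_ker_one_sub_quotient_range (hK : IsCompactOperator K) :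
    Nonempty ((1 - K).ker ≃ₗ[𝕜] H ⧸ (1 - K).range) := by
  obtain ⟨e⟩ := nonempty_linearEquiv_of_rank_eq hK.rank_ker_one_sub_eq_rank_orthogonal_range
  have : CompleteSpace (1 - K).range := hK.isClosed_range_one_sub.completeSpace_coe
  exact ⟨e.trans (Submodule.quotientEquivOfIsCompl _ _
    (Submodule.isCompl_orthogonal _)).symm⟩

end IsCompactOperator

theorem stmt3_general
    {H₁ H₂ : Type}
    [NormedAddCommGroup H₁] [InnerProductSpace ℂ H₁]
    [NormedAddCommGroup H₂] [InnerProductSpace ℂ H₂] [CompleteSpace H₂]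
    (A₁ : H₁ →L[ℂ] H₂) (A₂ : H₂ →L[ℂ] H₁)
    (hcompact : IsCompactOperator (A₁ ∘ A₂))
    (V₁ V₂ : Submodule ℂ (H₁ × H₂))
    (hV₁ : (V₁ : Set (H₁ × H₂)) = {p : H₁ × H₂ | p.2 = A₁ p.1})
    (hV₂ : (V₂ : Set (H₁ × H₂)) = {p : H₁ × H₂ | p.1 = A₂ p.2}) :
    FiniteDimensional ℂ ↥(V₁ ⊓ V₂) ∧
    IsClosed ((V₁ ⊔ V₂ : Submodule ℂ (H₁ × H₂)) : Set (H₁ × H₂)) ∧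
    FiniteDimensional ℂ ((H₁ × H₂) ⧸ (V₁ ⊔ V₂)) ∧
    Module.finrank ℂ ↥(V₁ ⊓ V₂) = Module.finrank ℂ ((H₁ × H₂) ⧸ (V₁ ⊔ V₂)) := by
  obtain rfl : V₁ = (A₁ : H₁ →ₗ[ℂ] H₂).graph := SetLike.coe_injective hV₁
  obtain rfl : V₂ = (A₂ : H₂ →ₗ[ℂ] H₁).swapGraph := SetLike.coe_injective hV₂
  have hK : IsCompactOperator (A₁ ∘L A₂) := hcompact
  have : FiniteDimensional ℂ (1 - A₁ ∘L A₂).ker := hK.finiteDimensional_ker_one_sub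
  obtain ⟨e⟩ := hK.nonempty_linearEquiv_ker_one_sub_quotient_range
  have e₁ : _ ≃ₗ[ℂ] (1 - A₁ ∘L A₂).ker := LinearMap.graphInfSwapGraphEquiv (A₁ : H₁ →ₗ[ℂ] H₂) A₂
  have e₂ : _ ≃ₗ[ℂ] H₂ ⧸ (1 - A₁ ∘L A₂).range :=
    LinearMap.quotientGraphSupSwapGraphEquiv (A₁ : H₁ →ₗ[ℂ] H₂) A₂
  have := Module.Finite.equiv e₁.symm
  have := Module.Finite.equiv ((e₁.trans e).trans e₂.symm)
  refine ⟨inferInstance, ?_, inferInstance, ((e₁.trans e).trans e₂.symm).finrank_eq⟩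
  rw [LinearMap.graph_sup_swapGraph]
  exact hK.isClosed_range_one_sub.preimage
    (snd ℂ H₁ H₂ - A₁ ∘L fst ℂ H₁ H₂).continuous

/-- For bounded operators `A₁ : H₁ →L H₂`, `A₂ : H₂ →L H₁` with
`A₁ ∘ A₂` compact, the graph `V₁` of `A₁` and the swapped graph `V₂` of `A₂`
satisfy the strong Riemann–Roch theorem with index 0: `V₁ ∩ V₂` is
finite-dimensional, `V₁ + V₂` is closed of finite codimension, and
`dim (V₁ ∩ V₂) = codim (V₁ + V₂)`. -/
theorem stmt3
    {H₁ H₂ : Type}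
    [NormedAddCommGroup H₁] [InnerProductSpace ℂ H₁] [CompleteSpace H₁]
    [NormedAddCommGroup H₂] [InnerProductSpace ℂ H₂] [CompleteSpace H₂]
    (A₁ : H₁ →L[ℂ] H₂) (A₂ : H₂ →L[ℂ] H₁)
    (hcompact : IsCompactOperator (A₁ ∘ A₂))
    (V₁ V₂ : Submodule ℂ (H₁ × H₂))
    (hV₁ : (V₁ : Set (H₁ × H₂)) = {p : H₁ × H₂ | p.2 = A₁ p.1})
    (hV₂ : (V₂ : Set (H₁ × H₂)) = {p : H₁ × H₂ | p.1 = A₂ p.2}) :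
    FiniteDimensional ℂ ↥(V₁ ⊓ V₂) ∧
    IsClosed ((V₁ ⊔ V₂ : Submodule ℂ (H₁ × H₂)) : Set (H₁ × H₂)) ∧
    FiniteDimensional ℂ ((H₁ × H₂) ⧸ (V₁ ⊔ V₂)) ∧
    Module.finrank ℂ ↥(V₁ ⊓ V₂) = Module.finrank ℂ ((H₁ × H₂) ⧸ (V₁ ⊔ V₂)) :=
  stmt3_general A₁ A₂ hcompact V₁ V₂ hV₁ hV₂
end

section
/- Let H = H₁ ⊕ H₂, V₁ the graph of a closed operator A₁ : H₁ → H₂ and V₂ the swapped graph of a bounded operator A₂ : H₂ → H₁. If both A₁∘A₂ and A₁*∘A₂* are compact, then dim(V₁ ∩ V₂) and the codimension of the closure of V₁ + V₂ are finite and equal. -/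
open Metric Set Filter Topology Module

local notation "⟪" x ", " y "⟫" => @inner ℂ _ _ x y

section Riesz

variable {H : Type} [NormedAddCommGroup H] [InnerProductSpace ℂ H] [CompleteSpace H]


theorem ker_eq_fix (T : H →L[ℂ] H) (x : H) :
    x ∈ LinearMap.ker ((1 - T : H →L[ℂ] H) : H →ₗ[ℂ] H) ↔ T x = x := by
  rw [LinearMap.mem_ker]
  constructor
  · intro h
    have : (1 - T) x = 0 := h
    rw [ContinuousLinearMap.sub_apply, ContinuousLinearMap.one_apply, sub_eq_zero] at this
    exact this.symm
  · intro h
    show (1 - T) x = 0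
    rw [ContinuousLinearMap.sub_apply, ContinuousLinearMap.one_apply, h, sub_self]

/-- Riesz: kernel of 1 - T is finite dimensional for compact T. -/
theorem lemA (T : H →L[ℂ] H) (hT : IsCompactOperator T) :
    FiniteDimensional ℂ (LinearMap.ker ((1 - T : H →L[ℂ] H) : H →ₗ[ℂ] H)) := by
  obtain ⟨K, hK, hKmem⟩ := hT
  obtain ⟨ε, hε, hball⟩ := Metric.mem_nhds_iff.1 hKmem
  set N : Submodule ℂ H := LinearMap.ker ((1 - T : H →L[ℂ] H) : H →ₗ[ℂ] H) with hN
  have hNc : IsClosed (N : Set H) := (ContinuousLinearMap.isClosed_ker (1 - T))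
  have hsub : closedBall (0:H) (ε/2) ∩ (N : Set H) ⊆ K := by
    intro x ⟨hx1, hx2⟩
    have hxb : x ∈ ball (0:H) ε := by
      rw [mem_ball, dist_zero_right]
      rw [mem_closedBall, dist_zero_right] at hx1
      linarith
    have := hball hxb
    rwa [mem_preimage, (ker_eq_fix T x).1 hx2] at this
  have hc : IsCompact (closedBall (0:H) (ε/2) ∩ (N : Set H)) :=
    hK.of_isClosed_subset (Metric.isClosed_closedBall.inter hNc) hsub
  have hc' : IsCompact (closedBall (0 : N) (ε/2)) := by
    rw [Subtype.isCompact_iff]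
    convert hc using 1
    ext x
    simp only [Set.mem_image, mem_closedBall, dist_zero_right, Set.mem_inter_iff, SetLike.mem_coe]
    constructor
    · rintro ⟨y, hy, rfl⟩
      exact ⟨by simpa using hy, y.2⟩
    · rintro ⟨h1, h2⟩
      exact ⟨⟨x, h2⟩, by simpa using h1, rfl⟩
  exact FiniteDimensional.of_isCompact_closedBall₀ ℂ (by linarith) hc'


theorem lemB (T : H →L[ℂ] H) (hT : IsCompactOperator T)
    [FiniteDimensional ℂ (LinearMap.ker ((1 - T : H →L[ℂ] H) : H →ₗ[ℂ] H))] :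
    IsClosed ((LinearMap.range ((1 - T : H →L[ℂ] H) : H →ₗ[ℂ] H) : Submodule ℂ H) : Set H) := by
  set S : H →L[ℂ] H := 1 - T with hS
  set N : Submodule ℂ H := LinearMap.ker (S : H →ₗ[ℂ] H)
  -- bounded below on Nᗮ
  have hbdd : ∃ c : ℝ, 0 < c ∧ ∀ x ∈ Nᗮ, c * ‖x‖ ≤ ‖S x‖ := by
    by_contra hcon
    push_neg at hcon
    have hseq : ∀ n : ℕ, ∃ u : H, u ∈ Nᗮ ∧ ‖u‖ = 1 ∧ ‖S u‖ < 1/(n+1) := by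
      intro n
      obtain ⟨x, hxN, hx⟩ := hcon (1/(n+1)) (by positivity)
      have hx0 : x ≠ 0 := by rintro rfl; simp at hx
      refine ⟨‖x‖⁻¹ • x, Nᗮ.smul_of_tower_mem (‖x‖⁻¹ : ℝ) hxN, ?_, ?_⟩
      · rw [norm_smul, norm_inv, norm_norm, inv_mul_cancel₀ (norm_ne_zero_iff.2 hx0)]
      · rw [S.map_smul_of_tower, norm_smul, norm_inv, norm_norm]
        rw [inv_mul_lt_iff₀ (norm_pos_iff.2 hx0)]
        calc ‖S x‖ < 1/(n+1) * ‖x‖ := hx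
          _ = ‖x‖ * (1/(n+1)) := by ring
    choose u hu1 hu2 hu3 using hseq
    have hcpt := hT.isCompact_closure_image_closedBall (𝕜₁ := ℂ) 1
    have humem : ∀ n, T (u n) ∈ closure (T '' closedBall 0 1) := fun n =>
      subset_closure ⟨u n, mem_closedBall_zero_iff.2 (hu2 n).le, rfl⟩
    obtain ⟨z, -, φ, hφ, hz⟩ := hcpt.isSeqCompact humem
    have hSu : Tendsto (fun n => S (u (φ n))) atTop (𝓝 0) := by
      refine squeeze_zero_norm (fun n => (hu3 (φ n)).le) ?_
      exact tendsto_one_div_add_atTop_nhds_zero_nat.comp hφ.tendsto_atTop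
    have heq : ∀ v : H, S v + T v = v := fun v => by
      rw [hS, ContinuousLinearMap.sub_apply, ContinuousLinearMap.one_apply]
      exact sub_add_cancel _ _
    have hu_tend : Tendsto (fun n => u (φ n)) atTop (𝓝 z) := by
      have h := hSu.add hz
      rw [zero_add] at h
      exact h.congr fun n => heq _
    have hz_orth : z ∈ Nᗮ :=
      N.isClosed_orthogonal.mem_of_tendsto hu_tend (Eventually.of_forall fun n => hu1 _)
    have hznorm : ‖z‖ = 1 := by
      have h1 := hu_tend.norm
      simp_rw [hu2] at h1
      exact tendsto_nhds_unique h1 tendsto_const_nhds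
    have hzN : z ∈ N := by
      have h2 : Tendsto (fun n => S (u (φ n))) atTop (𝓝 (S z)) :=
        (S.continuous.tendsto z).comp hu_tend
      have : S z = 0 := tendsto_nhds_unique h2 hSu
      exact LinearMap.mem_ker.2 this
    have : z = 0 := Submodule.disjoint_def.1 N.orthogonal_disjoint z hzN hz_orth
    rw [this, norm_zero] at hznorm
    norm_num at hznorm
  obtain ⟨c, hc, hcb⟩ := hbdd
  -- range S = S '' Nᗮ
  haveI : CompleteSpace Nᗮ := N.isClosed_orthogonal.completeSpace_coe
  set f : Nᗮ →L[ℂ] H := S.comp Nᗮ.subtypeL with hf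
  have haf : AntilipschitzWith (⟨c, hc.le⟩ : NNReal)⁻¹ f := by
    refine ContinuousLinearMap.antilipschitz_of_bound f ?_
    intro x
    show ‖x‖ ≤ c⁻¹ * ‖f x‖
    rw [le_inv_mul_iff₀ hc]
    exact hcb x x.2
  have hran : (LinearMap.range (S : H →ₗ[ℂ] H) : Set H) = Set.range f := by
    ext y
    constructor
    · rintro ⟨x, rfl⟩
      refine ⟨⟨x - (N.orthogonalProjection x : H), N.sub_starProjection_mem_orthogonal x⟩, ?_⟩
      show S (x - (N.orthogonalProjection x : H)) = S x
      rw [map_sub, sub_eq_self]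
      have : ((N.orthogonalProjection x : H)) ∈ N := Submodule.coe_mem _
      exact LinearMap.mem_ker.1 this
    · rintro ⟨x, rfl⟩
      exact ⟨x, rfl⟩
  rw [hran]
  exact haf.isClosed_range f.uniformContinuous

theorem lemC (T : H →L[ℂ] H) (hT : IsCompactOperator T)
    (hinj : LinearMap.ker ((1 - T : H →L[ℂ] H) : H →ₗ[ℂ] H) = ⊥) :
    LinearMap.range ((1 - T : H →L[ℂ] H) : H →ₗ[ℂ] H) = ⊤ := by
  set S : H →L[ℂ] H := 1 - T with hS
  by_contra hsurj
  -- powers of S are 1 - compact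
  have hTk : ∀ k : ℕ, ∃ Tk : H →L[ℂ] H, IsCompactOperator Tk ∧ S ^ k = 1 - Tk := by
    intro k
    induction k with
    | zero => exact ⟨0, isCompactOperator_zero, by simp⟩
    | succ n ih =>
      obtain ⟨Tk, hTkc, hTk⟩ := ih
      refine ⟨T + Tk - Tk.comp T, ?_, ?_⟩
      · exact (hT.add hTkc).sub (hTkc.comp_clm T)
      · rw [pow_succ, hTk, hS]
        ext x
        simp [ContinuousLinearMap.sub_apply, ContinuousLinearMap.add_apply,
          ContinuousLinearMap.comp_apply, map_sub]
        abel
  choose Tk hTkc hTkeq using hTk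
  have hRclosed : ∀ k : ℕ, IsClosed ((LinearMap.range ((S ^ k : H →L[ℂ] H) : H →ₗ[ℂ] H) : Submodule ℂ H) : Set H) := by
    intro k
    haveI := lemA (Tk k) (hTkc k)
    have := lemB (Tk k) (hTkc k)
    rw [← hTkeq k] at this
    exact this
  set R : ℕ → Submodule ℂ H := fun k => LinearMap.range ((S ^ k : H →L[ℂ] H) : H →ₗ[ℂ] H) with hR
  have hSinj : Function.Injective S := LinearMap.ker_eq_bot.1 hinj
  have hSkinj : ∀ k : ℕ, Function.Injective (S ^ k) := by
    intro k
    rw [FunLike.coe_pow_eq_iterate]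
    exact hSinj.iterate k
  -- chain is antitone
  have hmono : ∀ k : ℕ, R (k + 1) ≤ R k := by
    rintro k _ ⟨x, rfl⟩
    exact ⟨S x, by simp only [ContinuousLinearMap.coe_coe]; rw [← ContinuousLinearMap.comp_apply, ← ContinuousLinearMap.mul_def, ← pow_succ]⟩
  have hmono' : ∀ {i j : ℕ}, i ≤ j → R j ≤ R i := by
    intro i j hij
    induction hij with
    | refl => exact le_refl _
    | step h ih => exact le_trans (hmono _) ih
  have hstep : ∀ k : ℕ, ∀ x ∈ R k, S x ∈ R (k + 1) := by
    rintro k _ ⟨a, rfl⟩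
    exact ⟨a, by rw [pow_succ']; rfl⟩
  -- strictness
  obtain ⟨y, hy⟩ : ∃ y : H, y ∉ R 1 := by
    by_contra h
    push_neg at h
    apply hsurj
    rw [eq_top_iff]
    intro x _
    have := h x
    rw [hR] at this
    simpa [pow_one] using this
  have hproper : ∀ k : ℕ, ∃ v, v ∈ R k ∧ v ∉ R (k + 1) := by
    intro k
    refine ⟨(S ^ k) y, ⟨y, rfl⟩, ?_⟩
    rintro ⟨z, hz⟩
    apply hy
    have h1 : (S ^ k) (S z) = (S ^ k) y := by
      rw [← ContinuousLinearMap.mul_apply, ← pow_succ]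
      exact hz
    exact ⟨z, by simpa using hSkinj k h1⟩
  -- Riesz sequence
  have hriesz : ∀ k : ℕ, ∃ x : H, x ∈ R k ∧ ‖x‖ = 1 ∧ ∀ w ∈ R (k + 1), 1/2 ≤ ‖x - w‖ := by
    intro k
    obtain ⟨v, hv1, hv2⟩ := hproper k
    set F : Submodule ℂ (R k) := (R (k+1)).comap (R k).subtype with hF
    have hFc : IsClosed (F : Set (R k)) :=
      (hRclosed (k+1)).preimage continuous_subtype_val
    have hFne : ∃ x : R k, x ∉ F := ⟨⟨v, hv1⟩, by simpa [hF] using hv2⟩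
    obtain ⟨x₀, hx₀F, hx₀⟩ := riesz_lemma hFc hFne (show (1:ℝ)/2 < 1 by norm_num)
    have hx₀0 : x₀ ≠ 0 := by rintro rfl; exact hx₀F F.zero_mem
    set v₀ : H := (x₀ : H) with hv₀
    have hv₀0 : v₀ ≠ 0 := fun h => hx₀0 (Subtype.ext h)
    have hn0 : ‖v₀‖ ≠ 0 := norm_ne_zero_iff.2 hv₀0
    have hn0' : (0:ℝ) < ‖v₀‖ := norm_pos_iff.2 hv₀0
    have hbase : ∀ w ∈ R (k + 1), 1/2 * ‖v₀‖ ≤ ‖v₀ - w‖ := by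
      intro w hw
      have hwF : (⟨w, hmono _ hw⟩ : R k) ∈ F := by simpa [hF] using hw
      have := hx₀ _ hwF
      calc 1/2 * ‖v₀‖ = 1/2 * ‖x₀‖ := rfl
        _ ≤ ‖x₀ - ⟨w, hmono _ hw⟩‖ := this
        _ = ‖v₀ - w‖ := rfl
    refine ⟨‖v₀‖⁻¹ • v₀, (R k).smul_of_tower_mem _ x₀.2, ?_, ?_⟩
    · rw [norm_smul, norm_inv, norm_norm, inv_mul_cancel₀ hn0]
    · intro w hw
      have hw' : (‖v₀‖ : ℝ) • w ∈ R (k + 1) := (R (k+1)).smul_of_tower_mem _ hw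
      have hkey := hbase _ hw'
      have heq : ‖v₀‖⁻¹ • v₀ - w = ‖v₀‖⁻¹ • (v₀ - ‖v₀‖ • w) := by
        rw [smul_sub, smul_smul, inv_mul_cancel₀ hn0, one_smul]
      rw [heq, norm_smul, norm_inv, norm_norm, le_inv_mul_iff₀ hn0']
      calc ‖v₀‖ * (1/2) = 1/2 * ‖v₀‖ := by ring
        _ ≤ _ := hkey
  choose xs hxs1 hxs2 hxs3 using hriesz
  have hsep : ∀ i j : ℕ, i < j → 1/2 ≤ ‖T (xs i) - T (xs j)‖ := by
    intro i j hij
    have h1 : T (xs i) - T (xs j) = xs i - (S (xs i) + xs j - S (xs j)) := by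
      rw [hS]
      simp only [ContinuousLinearMap.sub_apply, ContinuousLinearMap.one_apply]
      abel
    have hw : S (xs i) + xs j - S (xs j) ∈ R (i+1) := by
      have h2 : S (xs i) ∈ R (i+1) := hstep i _ (hxs1 i)
      have h3 : xs j ∈ R (i+1) := hmono' hij (hxs1 j)
      have h4 : S (xs j) ∈ R (i+1) :=
        hmono' (Nat.succ_le_succ hij.le) (hstep j _ (hxs1 j))
      exact sub_mem (add_mem h2 h3) h4
    rw [h1]
    exact hxs3 i _ hw
  have hcpt := hT.isCompact_closure_image_closedBall (𝕜₁ := ℂ) 1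
  have hmem : ∀ n, T (xs n) ∈ closure (T '' closedBall 0 1) := fun n =>
    subset_closure ⟨xs n, mem_closedBall_zero_iff.2 (hxs2 n).le, rfl⟩
  obtain ⟨z, -, φ, hφ, hz⟩ := hcpt.isSeqCompact hmem
  have hc : CauchySeq (fun n => T (xs (φ n))) := hz.cauchySeq
  obtain ⟨n₀, hn₀⟩ := Metric.cauchySeq_iff.1 hc (1/2) (by norm_num)
  have h := hn₀ n₀ le_rfl (n₀+1) (Nat.le_succ _)
  have hlt : φ n₀ < φ (n₀ + 1) := hφ (Nat.lt_succ_self _)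
  have hge := hsep _ _ hlt
  rw [dist_eq_norm] at h
  linarith

/-- key contradiction: no subspace of `Rᗮ` of dim `> n`. -/
theorem lemD_aux (T : H →L[ℂ] H) (hT : IsCompactOperator T)
    (W : Submodule ℂ H) (hWle : W ≤ (LinearMap.range ((1 - T : H →L[ℂ] H) : H →ₗ[ℂ] H))ᗮ)
    [FiniteDimensional ℂ W]
    (hWrank : Module.finrank ℂ (LinearMap.ker ((1 - T : H →L[ℂ] H) : H →ₗ[ℂ] H)) < Module.finrank ℂ W) :
    False := by
  set S : H →L[ℂ] H := 1 - T with hS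
  set N : Submodule ℂ H := LinearMap.ker (S : H →ₗ[ℂ] H) with hN
  set R : Submodule ℂ H := LinearMap.range (S : H →ₗ[ℂ] H) with hR
  haveI : FiniteDimensional ℂ N := lemA T hT
  -- injective non-surjective φ : N →ₗ W
  obtain ⟨φ, hφinj, hφnsurj⟩ :
      ∃ φ : N →ₗ[ℂ] W, Function.Injective φ ∧ LinearMap.range φ ≠ ⊤ := by
    obtain ⟨φ, hφ⟩ : ∃ φ : N →ₗ[ℂ] W, Function.Injective φ := by
      set bN := finBasis ℂ N
      set bW := finBasis ℂ W
      have hle : finrank ℂ N ≤ finrank ℂ W := hWrank.le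
      have hcast : Function.Injective (Fin.castLE hle) := Fin.castLE_injective hle
      refine ⟨(bW.equivFun.symm.toLinearMap.comp
        (Function.ExtendByZero.linearMap ℂ (Fin.castLE hle))).comp bN.equivFun.toLinearMap, ?_⟩
      refine (bW.equivFun.symm.injective.comp ?_).comp bN.equivFun.injective
      intro f g hfg
      funext i
      have := congrFun hfg (Fin.castLE hle i)
      simpa [hcast.extend_apply] using (show Function.extend (Fin.castLE hle) f 0 (Fin.castLE hle i) = Function.extend (Fin.castLE hle) g 0 (Fin.castLE hle i) from this)
    refine ⟨φ, hφ, ?_⟩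
    intro htop
    have h1 : Module.finrank ℂ W = Module.finrank ℂ (LinearMap.range φ) := by
      rw [htop, finrank_top]
    have h2 : Module.finrank ℂ (LinearMap.range φ) ≤ Module.finrank ℂ N :=
      φ.finrank_range_le
    omega
  -- the finite-rank perturbation
  set P := N.orthogonalProjection
  set φL : N →L[ℂ] W := LinearMap.toContinuousLinearMap φ
  set F : H →L[ℂ] H := W.subtypeL.comp (φL.comp P) with hF
  have hFW : ∀ x, F x ∈ W := fun x => (φL (P x)).2
  have hFcpt : IsCompactOperator F := by
    set G : H →L[ℂ] W := φL.comp P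
    refine ⟨Subtype.val '' closedBall (0 : W) ‖G‖, ?_, ?_⟩
    · exact (isCompact_closedBall _ _).image continuous_subtype_val
    · apply Filter.mem_of_superset (Metric.closedBall_mem_nhds (0:H) one_pos)
      intro x hx
      refine ⟨G x, ?_, rfl⟩
      rw [mem_closedBall_zero_iff]
      calc ‖G x‖ ≤ ‖G‖ * ‖x‖ := G.le_opNorm x
        _ ≤ ‖G‖ * 1 := by
            refine mul_le_mul_of_nonneg_left ?_ (norm_nonneg G)
            rwa [mem_closedBall_zero_iff] at hx
        _ = ‖G‖ := mul_one _
  set T₂ : H →L[ℂ] H := T + F with hT₂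
  have hT₂cpt : IsCompactOperator T₂ := hT.add hFcpt
  have hS₂ : (1 - T₂ : H →L[ℂ] H) = S - F := by rw [hT₂, hS]; abel
  -- kernel of 1 - T₂ is trivial
  have hker : LinearMap.ker ((1 - T₂ : H →L[ℂ] H) : H →ₗ[ℂ] H) = ⊥ := by
    rw [Submodule.eq_bot_iff]
    intro x hx
    have hx' : S x = F x := by
      have : (1 - T₂) x = 0 := hx
      rw [hS₂, ContinuousLinearMap.sub_apply, sub_eq_zero] at this
      exact this
    have hSx0 : S x = 0 ∧ F x = 0 := by
      have h1 : S x ∈ R := ⟨x, rfl⟩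
      have h2 : S x ∈ Rᗮ := hx' ▸ hWle (hFW x)
      have h0 : S x = 0 := by
        have := Submodule.inf_orthogonal_eq_bot R
        have hm : S x ∈ R ⊓ Rᗮ := ⟨h1, h2⟩
        rw [this] at hm
        simpa using hm
      exact ⟨h0, by rw [← hx', h0]⟩
    have hxN : x ∈ N := LinearMap.mem_ker.2 hSx0.1
    have hPx : P x = ⟨x, hxN⟩ := Submodule.orthogonalProjection_mem_subspace_eq_self ⟨x, hxN⟩
    have hφ0 : φL (P x) = 0 := by
      have := hSx0.2
      rw [hF] at this
      exact Subtype.ext (by simpa using this)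
    rw [hPx] at hφ0
    have := hφinj (by rw [map_zero]; exact hφ0 : φ ⟨x, hxN⟩ = φ 0)
    simpa using congrArg (Subtype.val) this
  -- surjectivity
  have hsurj := lemC T₂ hT₂cpt hker
  obtain ⟨w₀, hw₀W, hw₀⟩ : ∃ w₀ : W, w₀ ∈ (⊤ : Submodule ℂ W) ∧ w₀ ∉ LinearMap.range φ := by
    obtain ⟨w₀, hmem, hnot⟩ := SetLike.exists_of_lt (lt_of_le_of_ne le_top hφnsurj).lt_top
    exact ⟨w₀, trivial, hnot⟩
  obtain ⟨x, hx⟩ : ∃ x : H, (1 - T₂) x = (w₀ : H) := by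
    have : (w₀ : H) ∈ LinearMap.range ((1 - T₂ : H →L[ℂ] H) : H →ₗ[ℂ] H) := hsurj ▸ Submodule.mem_top
    exact this
  have hxval : S x - F x = (w₀ : H) := by
    rw [← hx, hS₂]
    simp [ContinuousLinearMap.sub_apply]
  have hSx : S x ∈ Rᗮ := by
    have : S x = (w₀ : H) + F x := by rw [← hxval]; abel
    rw [this]
    exact Rᗮ.add_mem (hWle w₀.2) (hWle (hFW x))
  have hSx0 : S x = 0 := by
    have hm : S x ∈ R ⊓ Rᗮ := ⟨⟨x, rfl⟩, hSx⟩
    rw [Submodule.inf_orthogonal_eq_bot R] at hm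
    simpa using hm
  apply hw₀
  refine ⟨-(P x), ?_⟩
  have : (w₀ : H) = -(F x) := by rw [← hxval, hSx0]; abel
  apply Subtype.ext
  rw [map_neg]
  show -(φL (P x) : H) = (w₀ : H)
  rw [this]
  rfl

theorem lemD (T : H →L[ℂ] H) (hT : IsCompactOperator T) :
    FiniteDimensional ℂ ((LinearMap.range ((1 - T : H →L[ℂ] H) : H →ₗ[ℂ] H))ᗮ : Submodule ℂ H) ∧
    finrank ℂ ((LinearMap.range ((1 - T : H →L[ℂ] H) : H →ₗ[ℂ] H))ᗮ : Submodule ℂ H) ≤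
      finrank ℂ (LinearMap.ker ((1 - T : H →L[ℂ] H) : H →ₗ[ℂ] H)) := by
  set n := finrank ℂ (LinearMap.ker ((1 - T : H →L[ℂ] H) : H →ₗ[ℂ] H)) with hn
  have hrank : Module.rank ℂ ((LinearMap.range ((1 - T : H →L[ℂ] H) : H →ₗ[ℂ] H))ᗮ : Submodule ℂ H) ≤ n := by
    apply rank_le
    intro s hs
    by_contra hcard
    push_neg at hcard
    set fam : s → H := fun i => ((i : ((LinearMap.range ((1 - T : H →L[ℂ] H) : H →ₗ[ℂ] H))ᗮ : Submodule ℂ H)) : H) with hfam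
    have hli : LinearIndependent ℂ fam :=
      hs.map' (LinearMap.range ((1 - T : H →L[ℂ] H) : H →ₗ[ℂ] H))ᗮ.subtype (Submodule.ker_subtype _)
    set W := Submodule.span ℂ (Set.range fam) with hW
    haveI : FiniteDimensional ℂ W := FiniteDimensional.span_of_finite _ (Set.finite_range fam)
    have hWle : W ≤ (LinearMap.range ((1 - T : H →L[ℂ] H) : H →ₗ[ℂ] H))ᗮ :=
      Submodule.span_le.2 (by rintro _ ⟨i, rfl⟩; exact ((i : _)).1.2)
    have hfr : finrank ℂ W = s.card := by
      rw [finrank_span_eq_card hli, Fintype.card_coe]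
    exact lemD_aux T hT W hWle (by omega)
  refine ⟨?_, finrank_le_of_rank_le hrank⟩
  have h2 : Module.rank ℂ ((LinearMap.range ((1 - T : H →L[ℂ] H) : H →ₗ[ℂ] H))ᗮ : Submodule ℂ H) < Cardinal.aleph0 :=
    lt_of_le_of_lt hrank (Cardinal.nat_lt_aleph0 n)
  exact Module.rank_lt_aleph0_iff.1 h2

end Riesz


set_option maxHeartbeats 1000000 in
/-- Let `V₁` be the graph of a densely defined closed operator
`A₁ : H₁ →ₗ.[ℂ] H₂` and `V₂` the swapped graph of a bounded operator `A₂ : H₂ →L H₁`.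
If both `A₁ ∘ A₂` and `A₁* ∘ A₂*` are compact, then `dim (V₁ ∩ V₂)` and the
codimension of the closure of `V₁ + V₂` are finite and equal. -/
theorem stmt4
    {H₁ H₂ : Type}
    [NormedAddCommGroup H₁] [InnerProductSpace ℂ H₁] [CompleteSpace H₁]
    [NormedAddCommGroup H₂] [InnerProductSpace ℂ H₂] [CompleteSpace H₂]
    (A₁ : H₁ →ₗ.[ℂ] H₂)
    (hdense : Dense (A₁.domain : Set H₁))
    (hclosed : IsClosed (A₁.graph : Set (H₁ × H₂)))
    (A₂ : H₂ →L[ℂ] H₁)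
    (hrange : ∀ y : H₂, A₂ y ∈ A₁.domain)
    (hcompact : IsCompactOperator (fun y : H₂ => A₁ ⟨A₂ y, hrange y⟩))
    (hrange' : ∀ x : H₁, (ContinuousLinearMap.adjoint A₂) x ∈ A₁.adjoint.domain)
    (hcompact' : IsCompactOperator
      (fun x : H₁ => A₁.adjoint ⟨(ContinuousLinearMap.adjoint A₂) x, hrange' x⟩))
    (V₂ : Submodule ℂ (H₁ × H₂))
    (hV₂ : (V₂ : Set (H₁ × H₂)) = {p : H₁ × H₂ | p.1 = A₂ p.2}) :
    FiniteDimensional ℂ ↥(A₁.graph ⊓ V₂) ∧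
    FiniteDimensional ℂ ((H₁ × H₂) ⧸ (A₁.graph ⊔ V₂).topologicalClosure) ∧
    Module.finrank ℂ ↥(A₁.graph ⊓ V₂) =
      Module.finrank ℂ ((H₁ × H₂) ⧸ (A₁.graph ⊔ V₂).topologicalClosure) := by
  classical
  set A₂' : H₁ →L[ℂ] H₂ := ContinuousLinearMap.adjoint A₂ with hA₂'
  -- the bounded operator B = A₁ ∘ A₂ on H₂
  let Blin : H₂ →ₗ[ℂ] H₂ :=
    { toFun := fun y => A₁ ⟨A₂ y, hrange y⟩
      map_add' := fun y z => by
        have h : (⟨A₂ (y + z), hrange _⟩ : A₁.domain)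
            = ⟨A₂ y, hrange y⟩ + ⟨A₂ z, hrange z⟩ := Subtype.ext (by simp)
        show A₁ ⟨A₂ (y + z), hrange _⟩ = A₁ ⟨A₂ y, hrange y⟩ + A₁ ⟨A₂ z, hrange z⟩
        rw [h, A₁.map_add]
      map_smul' := fun c y => by
        have h : (⟨A₂ (c • y), hrange _⟩ : A₁.domain)
            = c • ⟨A₂ y, hrange y⟩ := Subtype.ext (by simp)
        show A₁ ⟨A₂ (c • y), hrange _⟩ = c • A₁ ⟨A₂ y, hrange y⟩
        rw [h, A₁.map_smul] }
  have hBlc : Continuous Blin := hcompact.continuous (σ₁₂ := RingHom.id ℂ)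
  let B : H₂ →L[ℂ] H₂ := ⟨Blin, hBlc⟩
  have hBcpt : IsCompactOperator B := hcompact
  have hBapp : ∀ y, B y = A₁ ⟨A₂ y, hrange y⟩ := fun _ => rfl
  -- the bounded operator B' = A₁* ∘ A₂* on H₁
  let B'lin : H₁ →ₗ[ℂ] H₁ :=
    { toFun := fun x => A₁.adjoint ⟨A₂' x, hrange' x⟩
      map_add' := fun y z => by
        have h : (⟨A₂' (y + z), hrange' _⟩ : A₁.adjoint.domain)
            = ⟨A₂' y, hrange' y⟩ + ⟨A₂' z, hrange' z⟩ := Subtype.ext (by simp)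
        show A₁.adjoint ⟨A₂' (y + z), hrange' _⟩
          = A₁.adjoint ⟨A₂' y, hrange' y⟩ + A₁.adjoint ⟨A₂' z, hrange' z⟩
        rw [h, A₁.adjoint.map_add]
      map_smul' := fun c y => by
        have h : (⟨A₂' (c • y), hrange' _⟩ : A₁.adjoint.domain)
            = c • ⟨A₂' y, hrange' y⟩ := Subtype.ext (by simp)
        show A₁.adjoint ⟨A₂' (c • y), hrange' _⟩ = c • A₁.adjoint ⟨A₂' y, hrange' y⟩
        rw [h, A₁.adjoint.map_smul] }
  have hB'lc : Continuous B'lin := hcompact'.continuous (σ₁₂ := RingHom.id ℂ)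
  let B' : H₁ →L[ℂ] H₁ := ⟨B'lin, hB'lc⟩
  have hB'cpt : IsCompactOperator B' := hcompact'
  have hB'app : ∀ x, B' x = A₁.adjoint ⟨A₂' x, hrange' x⟩ := fun _ => rfl
  -- formal adjoint identity
  have hfa : ∀ (u : H₁) (x : A₁.domain), ⟪B' u, (x : H₁)⟫ = ⟪A₂' u, A₁ x⟫ := by
    intro u x
    exact LinearPMap.adjoint_isFormalAdjoint hdense ⟨A₂' u, hrange' u⟩ x
  haveI hfk2 : FiniteDimensional ℂ (LinearMap.ker ((1 - B : H₂ →L[ℂ] H₂) : H₂ →ₗ[ℂ] H₂)) := lemA B hBcpt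
  haveI hfk1 : FiniteDimensional ℂ (LinearMap.ker ((1 - B' : H₁ →L[ℂ] H₁) : H₁ →ₗ[ℂ] H₁)) := lemA B' hB'cpt
  obtain ⟨hfd1, hle1⟩ := lemD B' hB'cpt
  obtain ⟨hfd2, hle2⟩ := lemD B hBcpt
  haveI := hfd1
  haveI := hfd2
  -- injection ker(1-B) → (range (1-B'))ᗮ
  have hj₁mem : ∀ y ∈ LinearMap.ker ((1 - B : H₂ →L[ℂ] H₂) : H₂ →ₗ[ℂ] H₂), A₂ y ∈ (LinearMap.range ((1 - B' : H₁ →L[ℂ] H₁) : H₁ →ₗ[ℂ] H₁))ᗮ := by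
    intro y hy
    rw [Submodule.mem_orthogonal]
    rintro _ ⟨u, rfl⟩
    have hBy : B y = y := (ker_eq_fix B y).1 hy
    have h1 : ⟪B' u, A₂ y⟫ = ⟪u, A₂ y⟫ := by
      have h := hfa u ⟨A₂ y, hrange y⟩
      have h2 : A₁ ⟨A₂ y, hrange y⟩ = y := by rw [← hBapp y, hBy]
      rw [h2] at h
      rw [h, hA₂', ContinuousLinearMap.adjoint_inner_left]
    rw [ContinuousLinearMap.coe_coe, ContinuousLinearMap.sub_apply, ContinuousLinearMap.one_apply, inner_sub_left, h1, sub_self]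
  have hj₁inj : ∀ y ∈ LinearMap.ker ((1 - B : H₂ →L[ℂ] H₂) : H₂ →ₗ[ℂ] H₂), A₂ y = 0 → y = 0 := by
    intro y hy h0
    have hBy : B y = y := (ker_eq_fix B y).1 hy
    rw [← hBy, hBapp]
    have h : (⟨A₂ y, hrange y⟩ : A₁.domain) = 0 := Subtype.ext (by simpa using h0)
    rw [h, A₁.map_zero]
  -- injection ker(1-B') → (range (1-B))ᗮ
  have hj₂mem : ∀ u ∈ LinearMap.ker ((1 - B' : H₁ →L[ℂ] H₁) : H₁ →ₗ[ℂ] H₁), A₂' u ∈ (LinearMap.range ((1 - B : H₂ →L[ℂ] H₂) : H₂ →ₗ[ℂ] H₂))ᗮ := by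
    intro u hu
    rw [Submodule.mem_orthogonal]
    rintro _ ⟨y, rfl⟩
    have hBu : B' u = u := (ker_eq_fix B' u).1 hu
    have h1 : ⟪B y, A₂' u⟫ = ⟪y, A₂' u⟫ := by
      have h := hfa u ⟨A₂ y, hrange y⟩
      rw [hBu] at h
      have h' : ⟪u, A₂ y⟫ = ⟪A₂' u, B y⟫ := by rw [hBapp y]; exact h
      have h2 : ⟪A₂ y, u⟫ = ⟪B y, A₂' u⟫ := by
        calc ⟪A₂ y, u⟫ = starRingEnd ℂ ⟪u, A₂ y⟫ := (inner_conj_symm _ _).symm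
          _ = starRingEnd ℂ ⟪A₂' u, B y⟫ := by rw [h']
          _ = ⟪B y, A₂' u⟫ := inner_conj_symm _ _
      rw [← h2, hA₂', ContinuousLinearMap.adjoint_inner_right]
    rw [ContinuousLinearMap.coe_coe, ContinuousLinearMap.sub_apply, ContinuousLinearMap.one_apply, inner_sub_left, h1, sub_self]
  have hj₂inj : ∀ u ∈ LinearMap.ker ((1 - B' : H₁ →L[ℂ] H₁) : H₁ →ₗ[ℂ] H₁), A₂' u = 0 → u = 0 := by
    intro u hu h0
    have hBu : B' u = u := (ker_eq_fix B' u).1 hu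
    rw [← hBu, hB'app]
    have h : (⟨A₂' u, hrange' u⟩ : A₁.adjoint.domain) = 0 := Subtype.ext (by simpa using h0)
    rw [h, A₁.adjoint.map_zero]
  let j₁ : (LinearMap.ker ((1 - B : H₂ →L[ℂ] H₂) : H₂ →ₗ[ℂ] H₂) : Submodule ℂ H₂) →ₗ[ℂ]
      ((LinearMap.range ((1 - B' : H₁ →L[ℂ] H₁) : H₁ →ₗ[ℂ] H₁))ᗮ : Submodule ℂ H₁) :=
    { toFun := fun y => ⟨A₂ y, hj₁mem y y.2⟩
      map_add' := fun a b => Subtype.ext (by exact map_add A₂ (a : H₂) b)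
      map_smul' := fun c a => Subtype.ext (by exact map_smul A₂ c (a : H₂)) }
  let j₂ : (LinearMap.ker ((1 - B' : H₁ →L[ℂ] H₁) : H₁ →ₗ[ℂ] H₁) : Submodule ℂ H₁) →ₗ[ℂ]
      ((LinearMap.range ((1 - B : H₂ →L[ℂ] H₂) : H₂ →ₗ[ℂ] H₂))ᗮ : Submodule ℂ H₂) :=
    { toFun := fun u => ⟨A₂' u, hj₂mem u u.2⟩
      map_add' := fun a b => Subtype.ext (by exact map_add A₂' (a : H₁) b)
      map_smul' := fun c a => Subtype.ext (by exact map_smul A₂' c (a : H₁)) }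
  have hj₁i : Function.Injective j₁ := by
    refine (injective_iff_map_eq_zero _).2 ?_
    intro a ha
    have h0 : A₂ (a : H₂) = 0 := congrArg Subtype.val ha
    exact Subtype.ext (hj₁inj a a.2 h0)
  have hj₂i : Function.Injective j₂ := by
    refine (injective_iff_map_eq_zero _).2 ?_
    intro a ha
    have h0 : A₂' (a : H₁) = 0 := congrArg Subtype.val ha
    exact Subtype.ext (hj₂inj a a.2 h0)
  have hn21 : finrank ℂ (LinearMap.ker ((1 - B : H₂ →L[ℂ] H₂) : H₂ →ₗ[ℂ] H₂)) ≤ finrank ℂ (LinearMap.ker ((1 - B' : H₁ →L[ℂ] H₁) : H₁ →ₗ[ℂ] H₁)) :=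
    le_trans (LinearMap.finrank_le_finrank_of_injective hj₁i) hle1
  have hn12 : finrank ℂ (LinearMap.ker ((1 - B' : H₁ →L[ℂ] H₁) : H₁ →ₗ[ℂ] H₁)) ≤ finrank ℂ (LinearMap.ker ((1 - B : H₂ →L[ℂ] H₂) : H₂ →ₗ[ℂ] H₂)) :=
    le_trans (LinearMap.finrank_le_finrank_of_injective hj₂i) hle2
  have hnn : finrank ℂ (LinearMap.ker ((1 - B : H₂ →L[ℂ] H₂) : H₂ →ₗ[ℂ] H₂)) = finrank ℂ (LinearMap.ker ((1 - B' : H₁ →L[ℂ] H₁) : H₁ →ₗ[ℂ] H₁)) :=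
    le_antisymm hn21 hn12
  have hV₂mem : ∀ p : H₁ × H₂, p ∈ V₂ ↔ p.1 = A₂ p.2 := fun p => by
    rw [← SetLike.mem_coe, hV₂]; exact Iff.rfl
  have hgV : ∀ p : H₁ × H₂, p ∈ A₁.graph ⊓ V₂ → B p.2 = p.2 := by
    intro p hp
    obtain ⟨hg, hv⟩ := Submodule.mem_inf.mp hp
    rw [LinearPMap.mem_graph_iff] at hg
    obtain ⟨x, hx⟩ := hg
    have h1 : (x : H₁) = p.1 := hx.1
    have h2 : A₁ x = p.2 := hx.2
    have hv' : p.1 = A₂ p.2 := (hV₂mem p).1 hv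
    rw [hBapp]
    have h3 : (⟨A₂ p.2, hrange p.2⟩ : A₁.domain) = x := Subtype.ext (by rw [h1, hv'])
    rw [h3, h2]
  have hmemK : ∀ y : ↥(LinearMap.ker ((1 - B : H₂ →L[ℂ] H₂) : H₂ →ₗ[ℂ] H₂)),
      ((A₂ (y : H₂), (y : H₂)) : H₁ × H₂) ∈ A₁.graph ⊓ V₂ := by
    intro y
    refine Submodule.mem_inf.mpr ⟨?_, ?_⟩
    · rw [LinearPMap.mem_graph_iff]
      refine ⟨⟨A₂ (y : H₂), hrange _⟩, rfl, ?_⟩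
      have hBy : B (y : H₂) = (y : H₂) := (ker_eq_fix B _).1 y.2
      rw [← hBapp]
      exact hBy
    · exact (hV₂mem _).2 rfl
  let e₁ : ↥(A₁.graph ⊓ V₂) ≃ₗ[ℂ] ↥(LinearMap.ker ((1 - B : H₂ →L[ℂ] H₂) : H₂ →ₗ[ℂ] H₂)) :=
    { toFun := fun p => ⟨(p : H₁ × H₂).2, (ker_eq_fix B _).2 (hgV _ p.2)⟩
      invFun := fun y => ⟨(A₂ (y : H₂), (y : H₂)), hmemK y⟩
      map_add' := fun a b => Subtype.ext rfl
      map_smul' := fun c a => Subtype.ext rfl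
      left_inv := by
        intro a
        apply Subtype.ext
        apply Prod.ext
        · exact ((hV₂mem _).1 a.2.2).symm
        · rfl
      right_inv := fun y => Subtype.ext rfl }
  haveI hfinGV : FiniteDimensional ℂ ↥(A₁.graph ⊓ V₂) :=
    LinearEquiv.finiteDimensional e₁.symm
  have hfrGV : finrank ℂ ↥(A₁.graph ⊓ V₂) = finrank ℂ ↥(LinearMap.ker ((1 - B : H₂ →L[ℂ] H₂) : H₂ →ₗ[ℂ] H₂)) :=
    e₁.finrank_eq
  -- ===== quotient side =====
  let e : WithLp 2 (H₁ × H₂) ≃L[ℂ] H₁ × H₂ := WithLp.prodContinuousLinearEquiv 2 ℂ H₁ H₂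
  set K : Submodule ℂ (H₁ × H₂) := A₁.graph ⊔ V₂ with hK
  set K' : Submodule ℂ (WithLp 2 (H₁ × H₂)) :=
    K.comap (e.toLinearEquiv : WithLp 2 (H₁ × H₂) →ₗ[ℂ] H₁ × H₂) with hK'
  have hmapK : K'.topologicalClosure.map
      (e.toLinearEquiv : WithLp 2 (H₁ × H₂) →ₗ[ℂ] H₁ × H₂) = K.topologicalClosure := by
    apply SetLike.coe_injective
    rw [Submodule.map_coe, Submodule.topologicalClosure_coe, Submodule.topologicalClosure_coe,
      hK', Submodule.comap_coe]
    calc ⇑e.toLinearEquiv '' closure (⇑e.toLinearEquiv ⁻¹' (K : Set (H₁ × H₂)))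
        = ⇑e '' closure (⇑e ⁻¹' (K : Set (H₁ × H₂))) := rfl
      _ = closure (⇑e '' (⇑e ⁻¹' (K : Set (H₁ × H₂)))) := e.toHomeomorph.image_closure _
      _ = closure (K : Set (H₁ × H₂)) := by
          rw [Set.image_preimage_eq _ e.surjective]
  let q₁ : ((H₁ × H₂) ⧸ K.topologicalClosure)
      ≃ₗ[ℂ] (WithLp 2 (H₁ × H₂) ⧸ K'.topologicalClosure) :=
    (Submodule.Quotient.equiv _ _ e.toLinearEquiv hmapK).symm
  haveI : CompleteSpace K'.topologicalClosure :=
    K'.isClosed_topologicalClosure.completeSpace_coe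
  let q₂ : (WithLp 2 (H₁ × H₂) ⧸ K'.topologicalClosure) ≃ₗ[ℂ] ↥((K'.topologicalClosure)ᗮ) :=
    Submodule.quotientEquivOfIsCompl _ _ Submodule.isCompl_orthogonal_of_hasOrthogonalProjection
  have horth : (K'.topologicalClosure)ᗮ = K'ᗮ := by
    rw [← Submodule.orthogonal_orthogonal_eq_closure, Submodule.triorthogonal_eq_orthogonal]
  let q₃ : ↥((K'.topologicalClosure)ᗮ) ≃ₗ[ℂ] ↥(K'ᗮ) := LinearEquiv.ofEq _ _ horth
  -- inner product computation on the L2 product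
  have hip : ∀ (a : H₁ × H₂) (z : WithLp 2 (H₁ × H₂)),
      ⟪(e.symm a : WithLp 2 (H₁ × H₂)), z⟫ = ⟪a.1, (e z).1⟫ + ⟪a.2, (e z).2⟫ := fun a z => rfl
  -- membership criterion for K'ᗮ
  have hKmem : ∀ z : WithLp 2 (H₁ × H₂), z ∈ K'ᗮ ↔
      (∀ x : A₁.domain, ⟪(x : H₁), (e z).1⟫ + ⟪A₁ x, (e z).2⟫ = 0)
      ∧ (∀ y : H₂, ⟪A₂ y, (e z).1⟫ + ⟪y, (e z).2⟫ = 0) := by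
    intro z
    rw [Submodule.mem_orthogonal]
    constructor
    · intro h
      constructor
      · intro x
        have hm : e.symm ((x : H₁), A₁ x) ∈ K' := by
          rw [hK', Submodule.mem_comap]
          show e (e.symm _) ∈ K
          rw [e.apply_symm_apply]
          exact Submodule.mem_sup_left (A₁.mem_graph x)
        have h0 := h _ hm
        rw [hip] at h0
        exact h0
      · intro y
        have hm : e.symm (A₂ y, y) ∈ K' := by
          rw [hK', Submodule.mem_comap]
          show e (e.symm _) ∈ K
          rw [e.apply_symm_apply]
          exact Submodule.mem_sup_right ((hV₂mem _).2 rfl)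
        have h0 := h _ hm
        rw [hip] at h0
        exact h0
    · rintro ⟨h1, h2⟩ w hw
      have hw' : e w ∈ K := hw
      rw [hK, Submodule.mem_sup] at hw'
      obtain ⟨a, ha, b, hb, hab⟩ := hw'
      have hwdec : w = e.symm a + e.symm b := by
        apply e.injective
        rw [map_add, e.apply_symm_apply, e.apply_symm_apply, hab]
      rw [hwdec, inner_add_left]
      rw [LinearPMap.mem_graph_iff] at ha
      obtain ⟨x, hx1, hx2⟩ := ha
      have hva : ⟪(e.symm a : WithLp 2 (H₁ × H₂)), z⟫ = 0 := by
        rw [hip, ← hx1, ← hx2]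
        exact h1 x
      have hvb : ⟪(e.symm b : WithLp 2 (H₁ × H₂)), z⟫ = 0 := by
        rw [hip, (hV₂mem b).1 hb]
        exact h2 b.2
      rw [hva, hvb, add_zero]
  -- forward membership
  have hfwd : ∀ u : H₁, B' u = u →
      (e.symm (u, -(A₂' u)) : WithLp 2 (H₁ × H₂)) ∈ K'ᗮ := by
    intro u hu
    rw [hKmem]
    have he : (e (e.symm (u, -(A₂' u)))) = (u, -(A₂' u)) := e.apply_symm_apply _
    constructor
    · intro x
      have h := hfa u x
      rw [hu] at h
      have h' : ⟪(x : H₁), u⟫ = ⟪A₁ x, A₂' u⟫ := by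
        calc ⟪(x : H₁), u⟫ = starRingEnd ℂ ⟪u, (x : H₁)⟫ := (inner_conj_symm _ _).symm
          _ = starRingEnd ℂ ⟪A₂' u, A₁ x⟫ := by rw [h]
          _ = ⟪A₁ x, A₂' u⟫ := inner_conj_symm _ _
      rw [he]
      show ⟪(x : H₁), u⟫ + ⟪A₁ x, -(A₂' u)⟫ = 0
      rw [inner_neg_right, h']
      ring
    · intro y
      rw [he]
      show ⟪A₂ y, u⟫ + ⟪y, -(A₂' u)⟫ = 0
      rw [inner_neg_right]
      have h9 : ⟪y, A₂' u⟫ = ⟪A₂ y, u⟫ := by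
        rw [hA₂', ContinuousLinearMap.adjoint_inner_right]
      rw [h9]
      ring
  let ψ : (LinearMap.ker ((1 - B' : H₁ →L[ℂ] H₁) : H₁ →ₗ[ℂ] H₁) : Submodule ℂ H₁) →ₗ[ℂ] ↥(K'ᗮ) :=
    { toFun := fun u => ⟨e.symm ((u : H₁), -(A₂' (u : H₁))), hfwd _ ((ker_eq_fix B' _).1 u.2)⟩
      map_add' := fun a b => Subtype.ext (by
        show (e.symm _ : WithLp 2 (H₁ × H₂)) = e.symm _ + e.symm _
        rw [← map_add]
        congr 1
        refine Prod.ext rfl ?_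
        rw [Submodule.coe_add]
        simp
        abel)
      map_smul' := fun c a => Subtype.ext (by
        show (e.symm _ : WithLp 2 (H₁ × H₂)) = c • e.symm _
        rw [← map_smul]
        congr 1
        refine Prod.ext rfl ?_
        rw [Submodule.coe_smul]
        simp) }
  have hψinj : Function.Injective ψ := by
    refine (injective_iff_map_eq_zero _).2 ?_
    intro a ha
    have h0 : (e.symm ((a : H₁), -(A₂' (a : H₁))) : WithLp 2 (H₁ × H₂)) = 0 :=
      congrArg Subtype.val ha
    have h1 : ((a : H₁), -(A₂' (a : H₁))) = ((0, 0) : H₁ × H₂) :=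
      e.symm.injective (by rw [h0]; exact (map_zero e.symm).symm)
    exact Subtype.ext (congrArg Prod.fst h1)
  have hψsurj : Function.Surjective ψ := by
    rintro ⟨z, hz⟩
    obtain ⟨h1, h2⟩ := (hKmem z).1 hz
    set u : H₁ := (e z).1 with hu
    set v : H₂ := (e z).2 with hv
    have hveq : v = -(A₂' u) := by
      have h4 : ∀ y : H₂, ⟪y, A₂' u + v⟫ = 0 := by
        intro y
        rw [inner_add_right, hA₂', ContinuousLinearMap.adjoint_inner_right]
        exact h2 y
      have h5 := h4 (A₂' u + v)
      rw [inner_self_eq_zero] at h5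
      exact eq_neg_of_add_eq_zero_right h5
    have hBu : B' u = u := by
      have h6 : ∀ x : A₁.domain, ⟪u - B' u, (x : H₁)⟫ = 0 := by
        intro x
        have h7 := h1 x
        rw [hveq, inner_neg_right, add_neg_eq_zero] at h7
        have h8 : ⟪u, (x : H₁)⟫ = ⟪B' u, (x : H₁)⟫ := by
          calc ⟪u, (x : H₁)⟫ = starRingEnd ℂ ⟪(x : H₁), u⟫ := (inner_conj_symm _ _).symm
            _ = starRingEnd ℂ ⟪A₁ x, A₂' u⟫ := by rw [h7]
            _ = ⟪A₂' u, A₁ x⟫ := inner_conj_symm _ _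
            _ = ⟪B' u, (x : H₁)⟫ := (hfa u x).symm
        rw [inner_sub_left, h8, sub_self]
      have h9 : u - B' u = 0 := hdense.eq_zero_of_inner_left ℂ (fun v hv => h6 ⟨v, hv⟩)
      rw [sub_eq_zero] at h9
      exact h9.symm
    refine ⟨⟨u, (ker_eq_fix B' u).2 hBu⟩, Subtype.ext ?_⟩
    show (e.symm (u, -(A₂' u)) : WithLp 2 (H₁ × H₂)) = z
    apply e.injective
    rw [e.apply_symm_apply]
    exact Prod.ext rfl hveq.symm
  let Ψ : (LinearMap.ker ((1 - B' : H₁ →L[ℂ] H₁) : H₁ →ₗ[ℂ] H₁) : Submodule ℂ H₁) ≃ₗ[ℂ] ↥(K'ᗮ) :=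
    LinearEquiv.ofBijective ψ ⟨hψinj, hψsurj⟩
  let Q : ((H₁ × H₂) ⧸ K.topologicalClosure)
      ≃ₗ[ℂ] (LinearMap.ker ((1 - B' : H₁ →L[ℂ] H₁) : H₁ →ₗ[ℂ] H₁) : Submodule ℂ H₁) :=
    ((q₁.trans q₂).trans q₃).trans Ψ.symm
  haveI hfinQ : FiniteDimensional ℂ ((H₁ × H₂) ⧸ K.topologicalClosure) :=
    LinearEquiv.finiteDimensional Q.symm
  refine ⟨hfinGV, hfinQ, ?_⟩
  rw [hfrGV, hnn, Q.finrank_eq]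
end
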